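/- For a closed convex set C ⊆ ℝ^d with B(r) ⊆ C ⊆ B(R), 0 < r ≤ R, the Gauge distance S_C(w) := inf_{u ∈ C} γ_C(w − u) satisfies S_C(w) = max(0, γ_C(w) − 1) for all w ∈ ℝ^d. -/

import Mathlib

/-!
The triangle inequality for the gauge, together with `γ_C(u) ≤ 1` on `C`, gives
`γ_C(w) - 1 ≤ γ_C(w - u)` for every `u ∈ C`. The bound is attained: by `u = w` when
`γ_C(w) ≤ 1`, and otherwise by the radial projection `u = γ_C(w)⁻¹ • w`, which lies in `C`
because `C` is closed, and for which `w - u = (1 - γ_C(w)⁻¹) • w`.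
-/

/-- The Gauge distance to `C`: `S_C(w) = inf_{u ∈ C} γ_C(w − u)`. -/
noncomputable def gaugeDist {d : ℕ} (C : Set (EuclideanSpace ℝ (Fin d)))
    (w : EuclideanSpace ℝ (Fin d)) : ℝ :=
  sInf ((fun u => gauge C (w - u)) '' C)

section

variable {E : Type*} [AddCommGroup E] [Module ℝ E] {C : Set E}

theorem gauge_sub_one_le_gauge_sub (hconv : Convex ℝ C) (habs : Absorbent ℝ C) {u : E}
    (hu : u ∈ C) (w : E) : gauge C w - 1 ≤ gauge C (w - u) := by
  have htri := gauge_add_le hconv habs (w - u) u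
  rw [sub_add_cancel] at htri
  linarith [gauge_le_one_of_mem hu]

theorem gauge_inv_gauge_smul_self {w : E} (hw : gauge C w ≠ 0) :
    gauge C ((gauge C w)⁻¹ • w) = 1 := by
  rw [gauge_smul_of_nonneg (inv_nonneg.2 (gauge_nonneg w)), smul_eq_mul, inv_mul_cancel₀ hw]

theorem gauge_sub_inv_gauge_smul_self {w : E} (hw : 1 ≤ gauge C w) :
    gauge C (w - (gauge C w)⁻¹ • w) = gauge C w - 1 := by
  have hpos : 0 < gauge C w := one_pos.trans_le hw
  have hsub : w - (gauge C w)⁻¹ • w = (1 - (gauge C w)⁻¹) • w := by rw [sub_smul, one_smul]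
  rw [hsub, gauge_smul_of_nonneg (sub_nonneg.2 (inv_le_one_of_one_le₀ hw)),
    smul_eq_mul, sub_mul, one_mul, inv_mul_cancel₀ hpos.ne']

variable [TopologicalSpace E] [ContinuousSMul ℝ E]

theorem mem_of_gauge_le_one_of_isClosed (hconv : Convex ℝ C) (habs : Absorbent ℝ C)
    (hclosed : IsClosed C) {x : E} (hx : gauge C x ≤ 1) : x ∈ C :=
  hclosed.closure_subset (mem_closure_of_gauge_le_one hconv habs.zero_mem habs hx)

theorem isLeast_image_gauge_sub (hconv : Convex ℝ C) (habs : Absorbent ℝ C)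
    (hclosed : IsClosed C) (w : E) :
    IsLeast ((fun u => gauge C (w - u)) '' C) (max 0 (gauge C w - 1)) := by
  refine ⟨?_, ?_⟩
  · rcases le_total (gauge C w) 1 with hw | hw
    · refine ⟨w, mem_of_gauge_le_one_of_isClosed hconv habs hclosed hw, ?_⟩
      dsimp only
      rw [sub_self, gauge_zero, max_eq_left (by linarith)]
    · have hproj : gauge C ((gauge C w)⁻¹ • w) ≤ 1 :=
        (gauge_inv_gauge_smul_self (one_pos.trans_le hw).ne').le
      refine ⟨_, mem_of_gauge_le_one_of_isClosed hconv habs hclosed hproj, ?_⟩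
      dsimp only
      rw [gauge_sub_inv_gauge_smul_self hw, max_eq_right (by linarith)]
  · rintro _ ⟨u, hu, rfl⟩
    exact max_le (gauge_nonneg _) (gauge_sub_one_le_gauge_sub hconv habs hu w)

end

theorem gaugeDist_eq_max_general {d : ℕ} (C : Set (EuclideanSpace ℝ (Fin d))) (r : ℝ)
    (hr : 0 < r) (hclosed : IsClosed C) (hconv : Convex ℝ C)
    (hlow : Metric.closedBall 0 r ⊆ C) :
    ∀ w : EuclideanSpace ℝ (Fin d), gaugeDist C w = max 0 (gauge C w - 1) := by
  intro w
  have habs : Absorbent ℝ C :=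
    absorbent_nhds_zero (Filter.mem_of_superset (Metric.closedBall_mem_nhds 0 hr) hlow)
  exact (isLeast_image_gauge_sub hconv habs hclosed w).csInf_eq

/-- For a closed convex set `C` with `B(r) ⊆ C ⊆ B(R)`, `0 < r ≤ R`, the Gauge
distance satisfies `S_C(w) = max(0, γ_C(w) − 1)` for all `w`. -/
theorem gaugeDist_eq_max {d : ℕ} (C : Set (EuclideanSpace ℝ (Fin d))) (r R : ℝ)
    (hr : 0 < r) (hrR : r ≤ R) (hclosed : IsClosed C) (hconv : Convex ℝ C)
    (hlow : Metric.closedBall 0 r ⊆ C) (hhigh : C ⊆ Metric.closedBall 0 R) :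
    ∀ w : EuclideanSpace ℝ (Fin d), gaugeDist C w = max 0 (gauge C w - 1) :=
  gaugeDist_eq_max_general C r hr hclosed hconv hlow
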